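/- Let V be a finite-dimensional real vector space. For a symmetric bilinear form L on V, define the 4-linear form R_L(x_1,x_2,x_3,x_4) := L(x_1,x_4) L(x_2,x_3) − L(x_1,x_3) L(x_2,x_4). Then the set {R_L : L a symmetric bilinear form on V} spans the vector space of all algebraic curvature tensors on V. -/

import Mathlib

/-- A 4-linear form on `V`. -/
def IsQuadrilinear {V : Type*} [AddCommGroup V] [Module ℝ V]
    (T : V → V → V → V → ℝ) : Prop :=
  (∀ (c : ℝ) (x x' y z w : V), T (c • x + x') y z w = c * T x y z w + T x' y z w) ∧
  (∀ (c : ℝ) (x y y' z w : V), T x (c • y + y') z w = c * T x y z w + T x y' z w) ∧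
  (∀ (c : ℝ) (x y z z' w : V), T x y (c • z + z') w = c * T x y z w + T x y z' w) ∧
  (∀ (c : ℝ) (x y z w w' : V), T x y z (c • w + w') = c * T x y z w + T x y z w')

/-- An algebraic curvature tensor on `V`: a 4-linear form satisfying
`R(x₁,x₂,x₃,x₄) = -R(x₂,x₁,x₃,x₄) = R(x₃,x₄,x₁,x₂)` and the first Bianchi identity. -/
def IsAlgCurvatureTensor {V : Type*} [AddCommGroup V] [Module ℝ V]
    (T : V → V → V → V → ℝ) : Prop :=
  IsQuadrilinear T ∧
  (∀ x₁ x₂ x₃ x₄ : V, T x₁ x₂ x₃ x₄ = -T x₂ x₁ x₃ x₄) ∧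
  (∀ x₁ x₂ x₃ x₄ : V, T x₁ x₂ x₃ x₄ = T x₃ x₄ x₁ x₂) ∧
  (∀ x₁ x₂ x₃ x₄ : V, T x₁ x₂ x₃ x₄ + T x₂ x₃ x₁ x₄ + T x₃ x₁ x₂ x₄ = 0)

/-- A symmetric bilinear form on `V`. -/
def IsSymmBilin {V : Type*} [AddCommGroup V] [Module ℝ V] (L : V → V → ℝ) : Prop :=
  (∀ (c : ℝ) (x x' y : V), L (c • x + x') y = c * L x y + L x' y) ∧
  (∀ (c : ℝ) (x y y' : V), L x (c • y + y') = c * L x y + L x y') ∧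
  (∀ x y : V, L x y = L y x)

/-!
Each `R_L` is a curvature tensor. Conversely, writing `φ ⊙ ψ` for the Kulkarni–Nomizu product,
`R_L = ½ L ⊙ L`, so polarization puts every `φ ⊙ ψ` with `φ, ψ` symmetric into the span of the
`R_L`. Now let `Π` be the linear symmetrization sending the pure tensor `α ⊗ β ⊗ γ ⊗ δ` to
`(αδ + δα) ⊙ (βγ + γβ)`. The symmetries of a curvature tensor `T` and the Bianchi identity give
`Π T = 12 T`, while expanding `T` in a basis writes `Π T` as a combination of Kulkarni–Nomizu
products of symmetric forms.
-/

open Submodule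

section

variable {V : Type*}

def bilinCurvature (L : V → V → ℝ) : V → V → V → V → ℝ :=
  fun x₁ x₂ x₃ x₄ => L x₁ x₄ * L x₂ x₃ - L x₁ x₃ * L x₂ x₄

def kulkarniNomizu (φ ψ : V → V → ℝ) : V → V → V → V → ℝ :=
  fun x y z w => φ x w * ψ y z + ψ x w * φ y z - φ x z * ψ y w - ψ x z * φ y w

def curvatureSymmetrization : (V → V → V → V → ℝ) →ₗ[ℝ] (V → V → V → V → ℝ) where
  toFun Q x y z w :=
    Q x y z w + Q x z y w + Q w y z x + Q w z y x + Q y x w z + Q y w x z + Q z x w y + Q z w x y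
      - Q x y w z - Q x w y z - Q z y w x - Q z w y x - Q y x z w - Q y z x w - Q w x z y
      - Q w z x y
  map_add' Q Q' := by funext x y z w; simp only [Pi.add_apply]; ring
  map_smul' c Q := by
    funext x y z w; simp only [Pi.smul_apply, smul_eq_mul, RingHom.id_apply]; ring

theorem kulkarniNomizu_eq_polarization (φ ψ : V → V → ℝ) :
    kulkarniNomizu φ ψ = bilinCurvature (φ + ψ) - bilinCurvature φ - bilinCurvature ψ := by
  funext x y z w
  simp only [kulkarniNomizu, bilinCurvature, Pi.add_apply, Pi.sub_apply]
  ring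

variable [AddCommGroup V] [Module ℝ V]

def symmProd (α β : Module.Dual ℝ V) : V → V → ℝ :=
  fun x y => α x * β y + β x * α y

def pureTensor (α β γ δ : Module.Dual ℝ V) : V → V → V → V → ℝ :=
  fun x y z w => α x * β y * γ z * δ w

theorem IsSymmBilin.add {φ ψ : V → V → ℝ} (hφ : IsSymmBilin φ) (hψ : IsSymmBilin ψ) :
    IsSymmBilin (φ + ψ) := by
  refine ⟨fun c x x' y => ?_, fun c x y y' => ?_, fun x y => ?_⟩ <;> simp only [Pi.add_apply]
  · rw [hφ.1, hψ.1]; ring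
  · rw [hφ.2.1, hψ.2.1]; ring
  · rw [hφ.2.2, hψ.2.2]

theorem isSymmBilin_symmProd (α β : Module.Dual ℝ V) : IsSymmBilin (symmProd α β) := by
  refine ⟨fun c x x' y => ?_, fun c x y y' => ?_, fun x y => ?_⟩ <;>
    simp only [symmProd, map_add, map_smul, smul_eq_mul] <;> ring

theorem kulkarniNomizu_mem_span {φ ψ : V → V → ℝ} (hφ : IsSymmBilin φ) (hψ : IsSymmBilin ψ) :
    kulkarniNomizu φ ψ ∈ span ℝ {R | ∃ L, IsSymmBilin L ∧ R = bilinCurvature L} := by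
  rw [kulkarniNomizu_eq_polarization]
  exact sub_mem (sub_mem (subset_span ⟨_, hφ.add hψ, rfl⟩) (subset_span ⟨φ, hφ, rfl⟩))
    (subset_span ⟨ψ, hψ, rfl⟩)

theorem curvatureSymmetrization_pureTensor (α β γ δ : Module.Dual ℝ V) :
    curvatureSymmetrization (pureTensor α β γ δ) =
      kulkarniNomizu (symmProd α δ) (symmProd β γ) := by
  funext x y z w
  simp only [curvatureSymmetrization, LinearMap.coe_mk, AddHom.coe_mk, pureTensor,
    kulkarniNomizu, symmProd]
  ring

theorem isAlgCurvatureTensor_bilinCurvature {L : V → V → ℝ} (hL : IsSymmBilin L) :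
    IsAlgCurvatureTensor (bilinCurvature L) := by
  obtain ⟨h1, h2, hs⟩ := hL
  refine ⟨⟨fun c x x' y z w => ?_, fun c x y y' z w => ?_, fun c x y z z' w => ?_,
    fun c x y z w w' => ?_⟩, fun x y z w => ?_, fun x y z w => ?_, fun x y z w => ?_⟩ <;>
    simp only [bilinCurvature]
  · simp only [h1]; ring
  · simp only [h1]; ring
  · simp only [h2]; ring
  · simp only [h2]; ring
  · ring
  · linear_combination -L w x * hs z y - L y z * hs w x + L w y * hs z x + L x z * hs w y
  · linear_combination L y w * hs z x + L x w * hs y z + L z w * hs x y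

variable (V) in
def curvatureTensors : Submodule ℝ (V → V → V → V → ℝ) where
  carrier := {T | IsAlgCurvatureTensor T}
  zero_mem' := by
    refine ⟨⟨?_, ?_, ?_, ?_⟩, ?_, ?_, ?_⟩ <;> intros <;> simp
  add_mem' := by
    rintro T T' ⟨⟨a₁, a₂, a₃, a₄⟩, b₁, b₂, b₃⟩ ⟨⟨a₁', a₂', a₃', a₄'⟩, b₁', b₂', b₃'⟩
    refine ⟨⟨fun c x x' y z w => ?_, fun c x y y' z w => ?_, fun c x y z z' w => ?_,
      fun c x y z w w' => ?_⟩, fun x y z w => ?_, fun x y z w => ?_, fun x y z w => ?_⟩ <;>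
      simp only [Pi.add_apply]
    · linear_combination a₁ c x x' y z w + a₁' c x x' y z w
    · linear_combination a₂ c x y y' z w + a₂' c x y y' z w
    · linear_combination a₃ c x y z z' w + a₃' c x y z z' w
    · linear_combination a₄ c x y z w w' + a₄' c x y z w w'
    · linear_combination b₁ x y z w + b₁' x y z w
    · linear_combination b₂ x y z w + b₂' x y z w
    · linear_combination b₃ x y z w + b₃' x y z w
  smul_mem' := by
    rintro r T ⟨⟨a₁, a₂, a₃, a₄⟩, b₁, b₂, b₃⟩
    refine ⟨⟨fun c x x' y z w => ?_, fun c x y y' z w => ?_, fun c x y z z' w => ?_,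
      fun c x y z w w' => ?_⟩, fun x y z w => ?_, fun x y z w => ?_, fun x y z w => ?_⟩ <;>
      simp only [Pi.smul_apply, smul_eq_mul]
    · linear_combination r * a₁ c x x' y z w
    · linear_combination r * a₂ c x y y' z w
    · linear_combination r * a₃ c x y z z' w
    · linear_combination r * a₄ c x y z w w'
    · linear_combination r * b₁ x y z w
    · linear_combination r * b₂ x y z w
    · linear_combination r * b₃ x y z w

theorem IsAlgCurvatureTensor.curvatureSymmetrization_eq {T : V → V → V → V → ℝ}
    (hT : IsAlgCurvatureTensor T) : curvatureSymmetrization T = (12 : ℝ) • T := by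
  obtain ⟨-, hanti, hpair, hbianchi⟩ := hT
  have hanti' : ∀ x y z w, T x y w z = -T x y z w := fun x y z w => by
    rw [hpair, hanti, ← hpair]
  funext x y z w
  simp only [curvatureSymmetrization, LinearMap.coe_mk, AddHom.coe_mk, Pi.smul_apply,
    smul_eq_mul]
  -- The symmetries turn the sixteen terms into `8 T x y z w + 4 (T x z y w - T x w y z)`, and the
  -- Bianchi identity says `T x z y w - T x w y z = T x y z w`.
  linarith [hanti' x z y w, hanti' x y z w, hanti' x w y z,
    hanti z x w y, hanti y x w z, hanti y x z w, hanti w x z y, hanti z x y w, hanti w z x y,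
    hpair w y z x, hpair w z y x, hpair y w x z, hpair z w x y, hpair z y w x, hpair z w y x,
    hpair y z x w, hbianchi x y z w]

theorem eq_sum_repr_mul_of_linear {ι : Type*} [Fintype ι] (B : Module.Basis ι ℝ V) {f : V → ℝ}
    (hf : ∀ (c : ℝ) (x x' : V), f (c • x + x') = c * f x + f x') (x : V) :
    f x = ∑ i, B.repr x i * f (B i) := by
  have hf0 : f 0 = 0 := by simpa using hf 1 0 0
  let g : V →ₗ[ℝ] ℝ :=
    { toFun := f
      map_add' := fun x x' => by simpa using hf 1 x x'
      map_smul' := fun c x => by simpa [hf0] using hf c x 0 }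
  conv_lhs => rw [← B.sum_repr x]
  exact (map_sum g _ _).trans (by simp [g])

theorem IsQuadrilinear.mem_span_pureTensor [FiniteDimensional ℝ V] {T : V → V → V → V → ℝ}
    (hT : IsQuadrilinear T) :
    T ∈ span ℝ {Q | ∃ α β γ δ : Module.Dual ℝ V, Q = pureTensor α β γ δ} := by
  let B := Module.finBasis ℝ V
  have hexpand : T = ∑ a, ∑ b, ∑ c, ∑ d, T (B a) (B b) (B c) (B d) •
      pureTensor (B.coord a) (B.coord b) (B.coord c) (B.coord d) := by
    funext x y z w
    simp only [Finset.sum_apply, Pi.smul_apply, pureTensor, Module.Basis.coord_apply,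
      smul_eq_mul]
    rw [eq_sum_repr_mul_of_linear B (f := (T · y z w)) (hT.1 · · · y z w)]
    refine Finset.sum_congr rfl fun a _ => ?_
    rw [eq_sum_repr_mul_of_linear B (f := (T (B a) · z w)) (hT.2.1 · (B a) · · z w)]
    simp only [Finset.mul_sum]
    refine Finset.sum_congr rfl fun b _ => ?_
    rw [eq_sum_repr_mul_of_linear B (f := (T (B a) (B b) · w)) (hT.2.2.1 · (B a) (B b) · · w)]
    simp only [Finset.mul_sum]
    refine Finset.sum_congr rfl fun c _ => ?_
    rw [eq_sum_repr_mul_of_linear B (f := (T (B a) (B b) (B c) ·))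
      (hT.2.2.2 · (B a) (B b) (B c) · ·)]
    simp only [Finset.mul_sum]
    refine Finset.sum_congr rfl fun d _ => ?_
    ring
  rw [hexpand]
  exact sum_mem fun a _ => sum_mem fun b _ => sum_mem fun c _ => sum_mem fun d _ =>
    smul_mem _ _ (subset_span ⟨_, _, _, _, rfl⟩)

theorem IsQuadrilinear.curvatureSymmetrization_mem_span [FiniteDimensional ℝ V]
    {T : V → V → V → V → ℝ} (hT : IsQuadrilinear T) :
    curvatureSymmetrization T ∈ span ℝ {R | ∃ L, IsSymmBilin L ∧ R = bilinCurvature L} := by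
  have hmap : (span ℝ {Q | ∃ α β γ δ : Module.Dual ℝ V, Q = pureTensor α β γ δ}).map
      curvatureSymmetrization ≤ span ℝ {R | ∃ L, IsSymmBilin L ∧ R = bilinCurvature L} := by
    refine (map_span_le _ _ _).mpr ?_
    rintro _ ⟨α, β, γ, δ, rfl⟩
    rw [curvatureSymmetrization_pureTensor]
    exact kulkarniNomizu_mem_span (isSymmBilin_symmProd α δ) (isSymmBilin_symmProd β γ)
  exact hmap (mem_map_of_mem hT.mem_span_pureTensor)

end

/-- the tensors `R_L(x₁,x₂,x₃,x₄) = L(x₁,x₄)L(x₂,x₃) - L(x₁,x₃)L(x₂,x₄)`,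
for `L` a symmetric bilinear form, span the space of all algebraic curvature tensors. -/
theorem span_of_R_L (V : Type*) [AddCommGroup V] [Module ℝ V] [FiniteDimensional ℝ V] :
    (Submodule.span ℝ
      { T : V → V → V → V → ℝ | ∃ L : V → V → ℝ, IsSymmBilin L ∧
          T = fun x₁ x₂ x₃ x₄ => L x₁ x₄ * L x₂ x₃ - L x₁ x₃ * L x₂ x₄ } :
        Set (V → V → V → V → ℝ)) =
    { T : V → V → V → V → ℝ | IsAlgCurvatureTensor T } := by
  have hspan : span ℝ {R | ∃ L, IsSymmBilin L ∧ R = bilinCurvature L} = curvatureTensors V := by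
    refine le_antisymm (span_le.mpr ?_) fun T hT => ?_
    · rintro _ ⟨L, hL, rfl⟩
      exact isAlgCurvatureTensor_bilinCurvature hL
    · have h12 : (12 : ℝ) • T ∈ span ℝ {R | ∃ L, IsSymmBilin L ∧ R = bilinCurvature L} :=
        hT.curvatureSymmetrization_eq ▸ hT.1.curvatureSymmetrization_mem_span
      simpa using smul_mem _ (12 : ℝ)⁻¹ h12
  exact congrArg SetLike.coe hspan
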